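/- arXiv:1503.06172 — 5 statements merged into one kernel-verified Lean document; each statement's English description precedes it below -/
import Mathlib

section
/- For all natural numbers n and k, J^k_n = ∑_{s=0}^{n} S(n,s) · s! · C(k+s, s), where J^k_n is the number of barred preferential arrangements of an n-element set with k bars, S(n,s) is the Stirling number of the second kind, and C denotes a binomial coefficient. -/
/-- Stirling numbers of the second kind. -/
def stirling : ℕ → ℕ → ℕ
  | 0, 0 => 1
  | 0, _ + 1 => 0
  | _ + 1, 0 => 0
  | n + 1, s + 1 => (s + 1) * stirling n (s + 1) + stirling n s

/-- `J k n`: the number of barred preferential arrangements of an `n`-set with `k` bars,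
given by its closed form `∑ S(n,s)·s!·C(k+s,s)`. -/
def J (k n : ℕ) : ℕ :=
  ∑ s ∈ Finset.range (n + 1), stirling n s * s.factorial * (k + s).choose s

open Finset Function

namespace BPA

def surjEquiv {α β γ : Type*} (e : α ≃ β) :
    {g : γ → α // Surjective g} ≃ {g : γ → β // Surjective g} where
  toFun g := ⟨e ∘ g.1, e.surjective.comp g.2⟩
  invFun g := ⟨e.symm ∘ g.1, e.symm.surjective.comp g.2⟩
  left_inv g := by ext x; simp
  right_inv g := by ext x; simp

lemma disj_of {α : Type*} (p q : α → Prop) (h : ∀ a, p a → q a → False) : Disjoint p q := by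
  rw [Pi.disjoint_iff]
  intro a
  rw [disjoint_iff]
  simp only [inf_Prop_eq, eq_iff_iff, iff_false, bot_eq_false]
  constructor
  · rintro ⟨hp, hq⟩; exact h a hp hq
  · exact False.elim

open scoped Classical in
lemma card_surj : ∀ n s : ℕ,
    Fintype.card {g : Fin n → Fin s // Surjective g} = stirling n s * s.factorial
  | 0, 0 => by
    have h1 : Fintype.card {g : Fin 0 → Fin 0 // Surjective g} = 1 := by
      rw [Fintype.card_eq_one_iff]
      refine ⟨⟨finZeroElim, fun x => x.elim0⟩, fun y => ?_⟩
      ext x; exact x.elim0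
    rw [h1, stirling]; simp
  | 0, s + 1 => by
    have h1 : Fintype.card {g : Fin 0 → Fin (s+1) // Surjective g} = 0 := by
      rw [Fintype.card_eq_zero_iff]
      refine ⟨fun g => ?_⟩
      obtain ⟨x, -⟩ := g.2 0
      exact x.elim0
    rw [h1, stirling]; simp
  | n + 1, 0 => by
    have h1 : Fintype.card {g : Fin (n+1) → Fin 0 // Surjective g} = 0 := by
      rw [Fintype.card_eq_zero_iff]
      exact ⟨fun g => (g.1 0).elim0⟩
    rw [h1, stirling]; simp
  | n + 1, s + 1 => by
    have key : Fintype.card {g : Fin (n + 1) → Fin (s + 1) // Surjective g} =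
        (s + 1) * (Fintype.card {g : Fin n → Fin (s + 1) // Surjective g}
          + Fintype.card {g : Fin n → Fin s // Surjective g}) := by
      have e1 : {g : Fin (n + 1) → Fin (s + 1) // Surjective g} ≃
          Σ v : Fin (s + 1), {g' : Fin n → Fin (s + 1) // Surjective (Fin.cons v g')} := by
        refine (Equiv.subtypeEquiv (Fin.consEquiv (fun _ => Fin (s + 1))).symm ?_).trans
          (Equiv.subtypeProdEquivSigmaSubtype
            (fun v (g' : Fin n → Fin (s+1)) => Surjective (Fin.cons v g')))
        intro g
        have hcg : Fin.cons (α := fun _ => Fin (s+1)) (g 0) (fun i => g i.succ) = g := by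
          funext i; refine Fin.cases ?_ ?_ i <;> simp
        constructor
        · intro hg; simpa [Fin.consEquiv, hcg]
        · intro hg; simpa [Fin.consEquiv, hcg] using hg
      rw [Fintype.card_congr e1, Fintype.card_sigma]
      have hv : ∀ v : Fin (s + 1),
          Fintype.card {g' : Fin n → Fin (s + 1) // Surjective (Fin.cons v g')} =
          Fintype.card {g : Fin n → Fin (s + 1) // Surjective g}
            + Fintype.card {g : Fin n → Fin s // Surjective g} := by
        intro v
        have hiff : ∀ g' : Fin n → Fin (s + 1), Surjective (Fin.cons v g') ↔
            (Surjective g' ∨ ((∀ x, g' x ≠ v) ∧ ∀ w, w ≠ v → ∃ x, g' x = w)) := by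
          intro g'
          constructor
          · intro h
            by_cases hvr : ∃ x, g' x = v
            · left
              intro w
              obtain ⟨y, hy⟩ := h w
              rcases Fin.eq_zero_or_eq_succ y with rfl | ⟨i, rfl⟩
              · rw [Fin.cons_zero] at hy
                obtain ⟨x, hx⟩ := hvr
                exact ⟨x, hx.trans hy⟩
              · rw [Fin.cons_succ] at hy
                exact ⟨i, hy⟩
            · right
              refine ⟨fun x hx => hvr ⟨x, hx⟩, fun w hw => ?_⟩
              obtain ⟨y, hy⟩ := h w
              rcases Fin.eq_zero_or_eq_succ y with rfl | ⟨i, rfl⟩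
              · rw [Fin.cons_zero] at hy
                exact absurd hy.symm hw
              · rw [Fin.cons_succ] at hy
                exact ⟨i, hy⟩
          · intro h w
            rcases h with h | ⟨-, h⟩
            · obtain ⟨x, hx⟩ := h w
              exact ⟨x.succ, by simpa using hx⟩
            · by_cases hw : w = v
              · exact ⟨0, by simp [hw]⟩
              · obtain ⟨x, hx⟩ := h w hw
                exact ⟨x.succ, by simpa using hx⟩
        rw [Fintype.card_congr (Equiv.subtypeEquivRight hiff)]
        rw [Fintype.card_subtype_or_disjoint]
        · congr 1
          have e2 : {g' : Fin n → Fin (s + 1) //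
              (∀ x, g' x ≠ v) ∧ ∀ w, w ≠ v → ∃ x, g' x = w} ≃
              {h : Fin n → {w : Fin (s + 1) // w ≠ v} // Surjective h} := by
            refine ⟨fun g => ⟨fun x => ⟨g.1 x, g.2.1 x⟩, fun w => ?_⟩,
                fun h => ⟨fun x => (h.1 x).1, fun x => (h.1 x).2, fun w hw => ?_⟩, ?_, ?_⟩
            · obtain ⟨x, hx⟩ := g.2.2 w.1 w.2
              exact ⟨x, Subtype.ext hx⟩
            · obtain ⟨x, hx⟩ := h.2 ⟨w, hw⟩
              exact ⟨x, congrArg Subtype.val hx⟩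
            · intro g; rfl
            · intro h; ext x; rfl
          rw [Fintype.card_congr e2]
          have hcard : Fintype.card {w : Fin (s + 1) // w ≠ v} = s := by
            simp [Fintype.card_subtype_compl]
          rw [Fintype.card_congr (surjEquiv (Fintype.equivFinOfCardEq hcard))]
        · refine disj_of _ _ (fun g hsurj hmiss => ?_)
          obtain ⟨x, hx⟩ := hsurj v
          exact hmiss.1 x hx
      rw [Finset.sum_congr rfl (fun v _ => hv v), Finset.sum_const, Finset.card_univ,
        Fintype.card_fin, smul_eq_mul]
    rw [key, card_surj n (s + 1), card_surj n s, stirling]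
    rw [Nat.factorial_succ]
    ring

lemma downclosed_eq_range (S : Finset ℕ) (h : ∀ m, m + 1 ∈ S → m ∈ S) :
    S = Finset.range S.card := by
  have hdown : ∀ d y, y + d ∈ S → y ∈ S := by
    intro d
    induction d with
    | zero => exact fun y hy => by simpa using hy
    | succ d ih =>
      intro y hy
      exact ih y (h _ (by rwa [show y + (d+1) = y + d + 1 from rfl] at hy))
  have hsub : S ⊆ Finset.range S.card := by
    intro x hx
    rw [Finset.mem_range]
    have hr : Finset.range (x + 1) ⊆ S := by
      intro y hy
      rw [Finset.mem_range] at hy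
      refine hdown (x - y) y ?_
      have : y + (x - y) = x := by omega
      rwa [this]
    have := Finset.card_le_card hr
    rw [Finset.card_range] at this
    omega
  refine Finset.eq_of_subset_of_card_le hsub ?_
  rw [Finset.card_range]

lemma card_fin_lt (N m : ℕ) (h : m ≤ N) :
    Fintype.card {b : Fin N // (b : ℕ) < m} = m :=
  Fintype.card_congr
    ⟨fun b => ⟨b.1.1, b.2⟩, fun c => ⟨⟨c.1, lt_of_lt_of_le c.2 h⟩, c.2⟩,
      fun b => by ext; rfl, fun c => by ext; rfl⟩ |>.trans (Fintype.card_fin m)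

lemma card_comp (K s : ℕ) :
    Nat.card {t : Fin K → ℕ // ∑ i, t i = s} = (K + s - 1).choose s := by
  classical
  let e : Multiset (Fin K) ≃ (Fin K → ℕ) :=
    Multiset.toFinsupp.toEquiv.trans Finsupp.equivFunOnFinite
  have he : ∀ m : Multiset (Fin K), ∀ i, e m i = m.count i := by
    intro m i
    simp [e, Multiset.toFinsupp_apply]
  have hcard : ∀ m : Multiset (Fin K), ∑ i, e m i = Multiset.card m := by
    intro m
    rw [Finset.sum_congr rfl fun i _ => he m i]
    exact Multiset.sum_count_eq_card (fun a _ => Finset.mem_univ a)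
  have e2 : {m : Multiset (Fin K) // Multiset.card m = s} ≃ {t : Fin K → ℕ // ∑ i, t i = s} :=
    Equiv.subtypeEquiv e (fun m => by rw [← hcard m])
  have h3 : Nat.card {t : Fin K → ℕ // ∑ i, t i = s} = Nat.card (Sym (Fin K) s) :=
    Nat.card_congr (e2.symm.trans (Equiv.refl _))
  rw [h3, Nat.card_eq_fintype_card, Sym.card_sym_eq_choose, Fintype.card_fin]

open scoped Classical in
/-- number of functions with a prescribed image -/
lemma card_fixed_image (n : ℕ) {β : Type*} [Fintype β] [DecidableEq β] (E : Finset β) :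
    Fintype.card {f : Fin n → β // Finset.image f Finset.univ = E} =
      stirling n E.card * E.card.factorial := by
  have e1 : {f : Fin n → β // Finset.image f Finset.univ = E} ≃
      {g : Fin n → E // Surjective g} := by
    refine ⟨fun f => ⟨fun x => ⟨f.1 x, ?_⟩, ?_⟩, fun g => ⟨fun x => (g.1 x).1, ?_⟩, ?_, ?_⟩
    · have hx := mem_image_of_mem f.1 (mem_univ x)
      rwa [f.2] at hx
    · intro w
      have hw : w.1 ∈ Finset.image f.1 Finset.univ := by rw [f.2]; exact w.2
      obtain ⟨x, -, hx⟩ := mem_image.1 hw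
      exact ⟨x, Subtype.ext hx⟩
    · ext b
      simp only [mem_image, mem_univ, true_and]
      constructor
      · rintro ⟨x, rfl⟩; exact (g.1 x).2
      · intro hb
        obtain ⟨x, hx⟩ := g.2 ⟨b, hb⟩
        exact ⟨x, congrArg Subtype.val hx⟩
    · intro f; rfl
    · intro g; ext x; rfl
  rw [Fintype.card_congr e1, Fintype.card_congr (surjEquiv E.equivFin), card_surj]

/-! ### Valid finsets and their parametrization by compositions -/

variable (n k : ℕ)

def Valid (E : Finset (Fin (k + 1) × Fin (n + 1))) : Prop :=
  ∀ i m, (∃ b, (i, b) ∈ E ∧ (b : ℕ) = m + 1) → ∃ b, (i, b) ∈ E ∧ (b : ℕ) = m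

open scoped Classical in
noncomputable def tOf (E : Finset (Fin (k + 1) × Fin (n + 1))) : Fin (k + 1) → ℕ :=
  fun i => (E.filter fun p => p.1 = i).card

open scoped Classical in
noncomputable def EOf (t : Fin (k + 1) → ℕ) : Finset (Fin (k + 1) × Fin (n + 1)) :=
  Finset.univ.filter fun p => (p.2 : ℕ) < t p.1

open scoped Classical in
lemma sum_tOf (E : Finset (Fin (k + 1) × Fin (n + 1))) : ∑ i, tOf n k E i = E.card :=
  (Finset.card_eq_sum_card_fiberwise (fun p _ => Finset.mem_univ p.1)).symm

open scoped Classical in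
lemma tOf_EOf (t : Fin (k + 1) → ℕ) (i : Fin (k + 1)) (h : t i ≤ n + 1) :
    tOf n k (EOf n k t) i = t i := by
  unfold tOf EOf
  rw [Finset.filter_filter, ← Fintype.card_subtype]
  have e1 : {p : Fin (k + 1) × Fin (n + 1) // (p.2 : ℕ) < t p.1 ∧ p.1 = i} ≃
      {b : Fin (n + 1) // (b : ℕ) < t i} := by
    refine ⟨fun p => ⟨p.1.2, by have h2 := p.2.1; rw [p.2.2] at h2; exact h2⟩,
      fun b => ⟨(i, b.1), b.2, rfl⟩, fun p => ?_, fun b => rfl⟩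
    apply Subtype.ext
    exact Prod.ext p.2.2.symm rfl
  rw [Fintype.card_congr e1, card_fin_lt _ _ h]

open scoped Classical in
lemma valid_EOf (t : Fin (k + 1) → ℕ) : Valid n k (EOf n k t) := by
  rintro i m ⟨b, hb, hbv⟩
  rw [EOf, Finset.mem_filter] at hb
  have hlt : (b : ℕ) < t i := hb.2
  have hmb : m + 1 ≤ n := by have := b.2; omega
  refine ⟨⟨m, by omega⟩, ?_, rfl⟩
  rw [EOf, Finset.mem_filter]
  exact ⟨Finset.mem_univ _, by simp; omega⟩

open scoped Classical in
lemma card_EOf (t : Fin (k + 1) → ℕ) (h : ∀ i, t i ≤ n + 1) :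
    (EOf n k t).card = ∑ i, t i := by
  rw [← sum_tOf n k]
  exact Finset.sum_congr rfl fun i _ => tOf_EOf n k t i (h i)

open scoped Classical in
lemma EOf_tOf (E : Finset (Fin (k + 1) × Fin (n + 1))) (hE : Valid n k E) :
    EOf n k (tOf n k E) = E := by
  ext ⟨i, b⟩
  rw [EOf, Finset.mem_filter]
  simp only [Finset.mem_univ, true_and]
  set S : Finset ℕ := (E.filter fun p => p.1 = i).image fun p => ((p.2 : Fin (n + 1)) : ℕ)
    with hSdef
  have hScard : S.card = tOf n k E i := by
    rw [hSdef]
    apply Finset.card_image_of_injOn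
    intro p hp q hq hpq
    rw [Finset.coe_filter] at hp hq
    simp only [Set.mem_setOf_eq] at hp hq
    exact Prod.ext (hp.2.trans hq.2.symm) (Fin.val_injective hpq)
  have hmemS : ∀ c : Fin (n + 1), ((c : ℕ) ∈ S ↔ (i, c) ∈ E) := by
    intro c
    rw [hSdef, Finset.mem_image]
    constructor
    · rintro ⟨p, hp, hpv⟩
      rw [Finset.mem_filter] at hp
      have hpic : p = (i, c) := Prod.ext hp.2 (Fin.val_injective hpv)
      exact hpic ▸ hp.1
    · intro hc
      exact ⟨(i, c), Finset.mem_filter.2 ⟨hc, rfl⟩, rfl⟩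
  have hdc : ∀ m, m + 1 ∈ S → m ∈ S := by
    intro m hm
    rw [hSdef, Finset.mem_image] at hm
    obtain ⟨p, hp, hpv⟩ := hm
    rw [Finset.mem_filter] at hp
    have hpe : (i, p.2) ∈ E := by rw [← hp.2]; exact hp.1
    obtain ⟨b', hb', hb'v⟩ := hE i m ⟨p.2, hpe, hpv⟩
    rw [← hb'v]
    exact (hmemS b').2 hb'
  have hrange := downclosed_eq_range S hdc
  rw [hScard] at hrange
  constructor
  · intro hlt
    have : (b : ℕ) ∈ S := by rw [hrange, Finset.mem_range]; exact hlt
    exact (hmemS b).1 this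
  · intro hmem
    have : (b : ℕ) ∈ S := (hmemS b).2 hmem
    rw [hrange, Finset.mem_range] at this
    exact this

open scoped Classical in
lemma card_valid (s : ℕ) (hs : s ≤ n + 1) :
    Fintype.card {E : Finset (Fin (k + 1) × Fin (n + 1)) // Valid n k E ∧ E.card = s} =
      (k + s).choose s := by
  rw [← Nat.card_eq_fintype_card]
  have e1 : {E : Finset (Fin (k + 1) × Fin (n + 1)) // Valid n k E ∧ E.card = s} ≃
      {t : Fin (k + 1) → ℕ // ∑ i, t i = s} := by
    refine ⟨fun E => ⟨tOf n k E.1, by rw [sum_tOf]; exact E.2.2⟩,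
      fun t => ⟨EOf n k t.1, valid_EOf n k t.1, ?_⟩, fun E => ?_, fun t => ?_⟩
    · rw [card_EOf n k t.1 fun i => ?_, t.2]
      calc t.1 i ≤ ∑ j, t.1 j := Finset.single_le_sum (fun j _ => Nat.zero_le _)
            (Finset.mem_univ i)
        _ = s := t.2
        _ ≤ n + 1 := hs
    · exact Subtype.ext (EOf_tOf n k E.1 E.2.1)
    · refine Subtype.ext (funext fun i => tOf_EOf n k t.1 i ?_)
      calc t.1 i ≤ ∑ j, t.1 j := Finset.single_le_sum (fun j _ => Nat.zero_le _)
            (Finset.mem_univ i)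
        _ = s := t.2
        _ ≤ n + 1 := hs
  rw [Nat.card_congr e1, card_comp]
  congr 1
  omega

end BPA

open BPA

/-- A barred preferential arrangement of `Fin n` with `k` bars, encoded as an assignment
of each element to a pair (section, block index within that section), where in each
section the set of used block indices is an initial segment of `ℕ`. -/
theorem stmt_0 (n k : ℕ) :
    Nat.card {f : Fin n → Fin (k + 1) × Fin (n + 1) //
      ∀ i : Fin (k + 1), ∀ m : ℕ,
        (∃ x, (f x).1 = i ∧ ((f x).2 : ℕ) = m + 1) → ∃ x, (f x).1 = i ∧ ((f x).2 : ℕ) = m} =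
    J k n := by
  classical
  set P : (Fin n → Fin (k + 1) × Fin (n + 1)) → Prop := fun f =>
    ∀ i : Fin (k + 1), ∀ m : ℕ,
      (∃ x, (f x).1 = i ∧ ((f x).2 : ℕ) = m + 1) → ∃ x, (f x).1 = i ∧ ((f x).2 : ℕ) = m
    with hP
  have hlink : ∀ f, P f ↔ Valid n k (Finset.image f Finset.univ) := by
    intro f
    have hex : ∀ (i : Fin (k+1)) (c : ℕ),
        (∃ x, (f x).1 = i ∧ ((f x).2 : ℕ) = c) ↔
        (∃ b, (i, b) ∈ Finset.image f Finset.univ ∧ (b : ℕ) = c) := by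
      intro i c
      constructor
      · rintro ⟨x, h1, h2⟩
        refine ⟨(f x).2, ?_, h2⟩
        rw [Finset.mem_image]
        exact ⟨x, Finset.mem_univ x, by rw [← h1]⟩
      · rintro ⟨b, hb, hbv⟩
        rw [Finset.mem_image] at hb
        obtain ⟨x, -, hx⟩ := hb
        exact ⟨x, by rw [hx], by rw [hx]; exact hbv⟩
    unfold Valid
    constructor
    · intro h i m hm
      exact (hex i m).1 (h i m ((hex i (m+1)).2 hm))
    · intro h i m hm
      exact (hex i m).2 (h i m ((hex i (m+1)).1 hm))
  rw [Nat.card_eq_fintype_card, Fintype.card_subtype]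
  have hmaps : ∀ f ∈ Finset.univ.filter P, Finset.image f Finset.univ ∈
      Finset.univ.filter (fun E : Finset (Fin (k + 1) × Fin (n + 1)) =>
        Valid n k E ∧ E.card ≤ n) := by
    intro f hf
    rw [Finset.mem_filter] at hf ⊢
    refine ⟨Finset.mem_univ _, (hlink f).1 hf.2, ?_⟩
    calc (Finset.image f Finset.univ).card ≤ (Finset.univ : Finset (Fin n)).card :=
        Finset.card_image_le
      _ = n := by rw [Finset.card_univ, Fintype.card_fin]
  rw [Finset.card_eq_sum_card_fiberwise hmaps]
  have hfib : ∀ E ∈ Finset.univ.filter (fun E : Finset (Fin (k + 1) × Fin (n + 1)) =>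
      Valid n k E ∧ E.card ≤ n),
      ((Finset.univ.filter P).filter fun f => Finset.image f Finset.univ = E).card =
        stirling n E.card * E.card.factorial := by
    intro E hE
    rw [Finset.mem_filter] at hE
    rw [Finset.filter_filter]
    have : Finset.univ.filter (fun f => P f ∧ Finset.image f Finset.univ = E) =
        Finset.univ.filter (fun f : Fin n → Fin (k + 1) × Fin (n + 1) =>
          Finset.image f Finset.univ = E) := by
      refine Finset.filter_congr fun f _ => ?_
      constructor
      · exact fun h => h.2
      · intro h
        refine ⟨?_, h⟩
        rw [hlink f, h]
        exact hE.2.1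
    rw [this, ← Fintype.card_subtype, card_fixed_image]
  rw [Finset.sum_congr rfl hfib]
  have hmaps2 : ∀ E ∈ Finset.univ.filter (fun E : Finset (Fin (k + 1) × Fin (n + 1)) =>
      Valid n k E ∧ E.card ≤ n), E.card ∈ Finset.range (n + 1) := by
    intro E hE
    rw [Finset.mem_filter] at hE
    rw [Finset.mem_range]
    omega
  rw [← Finset.sum_fiberwise_of_maps_to hmaps2
    (fun E => stirling n E.card * E.card.factorial)]
  unfold J
  refine Finset.sum_congr rfl fun s hs => ?_
  rw [Finset.mem_range] at hs
  have hconst : ∀ E ∈ (Finset.univ.filter (fun E : Finset (Fin (k + 1) × Fin (n + 1)) =>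
      Valid n k E ∧ E.card ≤ n)).filter (fun E => E.card = s),
      stirling n E.card * E.card.factorial = stirling n s * s.factorial := by
    intro E hE
    rw [Finset.mem_filter] at hE
    rw [hE.2]
  rw [Finset.sum_congr rfl hconst, Finset.sum_const, smul_eq_mul]
  have hcount : ((Finset.univ.filter (fun E : Finset (Fin (k + 1) × Fin (n + 1)) =>
      Valid n k E ∧ E.card ≤ n)).filter (fun E => E.card = s)).card = (k + s).choose s := by
    rw [Finset.filter_filter]
    have : Finset.univ.filter (fun E : Finset (Fin (k + 1) × Fin (n + 1)) =>
        (Valid n k E ∧ E.card ≤ n) ∧ E.card = s) =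
        Finset.univ.filter (fun E : Finset (Fin (k + 1) × Fin (n + 1)) =>
          Valid n k E ∧ E.card = s) := by
      refine Finset.filter_congr fun E _ => ?_
      constructor
      · rintro ⟨⟨h1, -⟩, h3⟩; exact ⟨h1, h3⟩
      · rintro ⟨h1, h3⟩; exact ⟨⟨h1, by omega⟩, h3⟩
    rw [this, ← Fintype.card_subtype, card_valid n k s (by omega)]
  rw [hcount]
  ring
end

section
/- For all n ≥ 0 and k ≥ 1, J^k_n = ∑_{s=0}^{n} C(n,s) · J^0_s · J^{k-1}_{n-s}, where J^k_n = ∑_{s=0}^{n} S(n,s)·s!·C(k+s,s) and S(n,s) is the Stirling number of the second kind. -/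
def Surj (n s : ℕ) : ℕ := stirling n s * s.factorial

@[simp] lemma stirling_zero_zero : stirling 0 0 = 1 := rfl
@[simp] lemma stirling_zero_succ (s : ℕ) : stirling 0 (s + 1) = 0 := rfl

lemma stirling_eq_zero : ∀ n s : ℕ, n < s → stirling n s = 0 := by
  intro n
  induction n with
  | zero => intro s hs; cases s with
    | zero => omega
    | succ t => rfl
  | succ m ih =>
    intro s hs
    cases s with
    | zero => omega
    | succ t =>
      show (t + 1) * stirling m (t + 1) + stirling m t = 0
      rw [ih (t+1) (by omega), ih t (by omega)]; ring

lemma surj_eq_zero {n s : ℕ} (h : n < s) : Surj n s = 0 := by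
  simp [Surj, stirling_eq_zero n s h]

lemma surj_succ_succ (n s : ℕ) :
    Surj (n + 1) (s + 1) = (s + 1) * (Surj n (s + 1) + Surj n s) := by
  show ((s + 1) * stirling n (s + 1) + stirling n s) * (s+1).factorial = _
  unfold Surj
  rw [Nat.factorial_succ]
  ring

lemma surj_zero_succ (n : ℕ) : Surj (n + 1) 0 = 0 := by rfl

lemma surj_succ_zero (s : ℕ) : Surj 0 (s + 1) = 0 := by simp [Surj]

lemma conv (n : ℕ) : ∀ a b : ℕ,
    ∑ m ∈ Finset.range (n + 1), n.choose m * Surj m a * Surj (n - m) b = Surj n (a + b) := by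
  induction n with
  | zero =>
    intro a b
    cases a with
    | zero => cases b <;> simp [Surj]
    | succ a =>
      cases b with
      | zero => simp [Surj]
      | succ b => simp [Surj]; left; exact stirling_eq_zero 0 _ (by omega)
  | succ n ih =>
    intro a b
    cases a with
    | zero =>
      rw [Finset.sum_eq_single_of_mem 0 (by simp)]
      · simp [Surj]
      · intro m _ hm
        obtain ⟨m', rfl⟩ := Nat.exists_eq_succ_of_ne_zero hm
        simp [surj_zero_succ]
    | succ a =>
      cases b with
      | zero =>
        rw [Finset.sum_eq_single_of_mem (n+1) (by simp)]
        · simp [Surj]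
        · intro m hm hmne
          have : n + 1 - m ≠ 0 := by simp at hm; omega
          obtain ⟨j, hj⟩ := Nat.exists_eq_succ_of_ne_zero this
          rw [hj, surj_zero_succ]; ring
      | succ b =>
        rw [Finset.sum_range_succ']
        rw [surj_succ_zero, Nat.choose_zero_right]
        simp only [mul_zero, zero_mul, add_zero, one_mul]
        have e1 : ∀ m ∈ Finset.range (n+1),
            (n+1).choose (m+1) * Surj (m+1) (a+1) * Surj (n + 1 - (m+1)) (b+1)
            = ((a+1) * (n.choose m * Surj m (a+1) * Surj (n-m) (b+1))
               + (a+1) * (n.choose m * Surj m a * Surj (n-m) (b+1)))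
              + n.choose (m+1) * Surj (m+1) (a+1) * Surj (n-m) (b+1) := by
          intro m hm
          rw [Nat.choose_succ_succ, surj_succ_succ, Nat.succ_sub_succ]
          ring
        rw [Finset.sum_congr rfl e1, Finset.sum_add_distrib, Finset.sum_add_distrib,
          ← Finset.mul_sum, ← Finset.mul_sum, ih, ih]
        set A : ℕ → ℕ := fun m => n.choose m * Surj m (a+1) * Surj (n+1-m) (b+1) with hA
        have e2 : ∑ m ∈ Finset.range (n+1),
            n.choose (m+1) * Surj (m+1) (a+1) * Surj (n-m) (b+1)
            = ∑ m ∈ Finset.range (n+1), A m := by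
          have h1 := Finset.sum_range_succ' A (n+1)
          have h2 := Finset.sum_range_succ A (n+1)
          have hz0 : A 0 = 0 := by simp [hA, surj_succ_zero]
          have hzt : A (n+1) = 0 := by simp [hA, Nat.choose_succ_self]
          have h3 : ∀ m, A (m+1) = n.choose (m+1) * Surj (m+1) (a+1) * Surj (n-m) (b+1) := by
            intro m; simp [hA, Nat.succ_sub_succ]
          simp only [hzt, add_zero] at h2
          simp only [h3, hz0, add_zero] at h1
          omega
        rw [e2]
        have e3 : ∀ m ∈ Finset.range (n+1), A m
            = (b+1) * (n.choose m * Surj m (a+1) * Surj (n-m) (b+1))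
              + (b+1) * (n.choose m * Surj m (a+1) * Surj (n-m) b) := by
          intro m hm
          have hnm : n + 1 - m = (n - m) + 1 := by
            simp only [Finset.mem_range] at hm; omega
          rw [hA]
          show n.choose m * Surj m (a+1) * Surj (n+1-m) (b+1) = _
          rw [hnm, surj_succ_succ]; ring
        rw [Finset.sum_congr rfl e3, Finset.sum_add_distrib, ← Finset.mul_sum, ← Finset.mul_sum,
          ih, ih]
        have n1 : a + 1 + (b+1) = (a+b+1)+1 := by omega
        have n2 : a + (b+1) = a+b+1 := by omega
        have n3 : a + 1 + b = a+b+1 := by omega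
        rw [n1, n2, n3, surj_succ_succ]
        ring

lemma hockey (k : ℕ) : ∀ s : ℕ, ∑ b ∈ Finset.range (s+1), (k+b).choose b = (k+1+s).choose s := by
  intro s
  induction s with
  | zero => simp
  | succ s ih =>
    rw [Finset.sum_range_succ, ih]
    have h1 : k + (s+1) = k + 1 + s := by omega
    have h2 : k + 1 + (s+1) = (k+1+s) + 1 := by omega
    rw [h1, h2, Nat.choose_succ_succ]

lemma tri (N : ℕ) (f g : ℕ → ℕ) (hf : ∀ s, N ≤ s → f s = 0) :
    ∑ a ∈ Finset.range N, ∑ b ∈ Finset.range N, f (a+b) * g b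
    = ∑ s ∈ Finset.range N, f s * ∑ b ∈ Finset.range (s+1), g b := by
  rw [Finset.sum_comm]
  have h1 : ∀ b ∈ Finset.range N, ∑ a ∈ Finset.range N, f (a+b) * g b
      = ∑ s ∈ Finset.Ico b N, f s * g b := by
    intro b hb
    simp only [Finset.mem_range] at hb
    have e : ∑ a ∈ Finset.range N, f (a+b) * g b = ∑ a ∈ Finset.range (N-b), f (a+b) * g b := by
      refine (Finset.sum_subset (Finset.range_subset_range.mpr (by omega)) ?_).symm
      intro a ha hna
      simp only [Finset.mem_range] at ha hna
      rw [hf (a+b) (by omega)]; ring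
    rw [e, Finset.sum_Ico_eq_sum_range]
    exact Finset.sum_congr rfl fun i _ => by rw [add_comm b i]
  rw [Finset.sum_congr rfl h1, Finset.range_eq_Ico,
    Finset.sum_Ico_Ico_comm 0 N (fun b s => f s * g b)]
  refine Finset.sum_congr rfl fun s _ => ?_
  rw [← Finset.range_eq_Ico, Finset.mul_sum]

theorem stmt_1 (n k : ℕ) (hk : 1 ≤ k) :
    J k n = ∑ s ∈ Finset.range (n + 1), n.choose s * J 0 s * J (k - 1) (n - s) := by
  have hJ : ∀ j m, J j m = ∑ a ∈ Finset.range (m+1), Surj m a * (j+a).choose a := by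
    intro j m; unfold J Surj; rfl
  -- extend the range of the inner sums to n+1
  have hsplit : ∀ m ∈ Finset.range (n+1), n.choose m * J 0 m * J (k-1) (n-m)
      = ∑ a ∈ Finset.range (n+1), ∑ b ∈ Finset.range (n+1),
          (n.choose m * Surj m a * Surj (n-m) b) * (k-1+b).choose b := by
    intro m hm
    simp only [Finset.mem_range] at hm
    have hJ0 : J 0 m = ∑ a ∈ Finset.range (n+1), Surj m a := by
      rw [hJ]
      simp only [Nat.zero_add, Nat.choose_self, mul_one]
      exact Finset.sum_subset (Finset.range_subset_range.mpr (by omega))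
        (fun a _ ha => surj_eq_zero (by simp at ha; omega))
    have hJ1 : J (k-1) (n-m) = ∑ b ∈ Finset.range (n+1), Surj (n-m) b * (k-1+b).choose b := by
      rw [hJ]
      exact Finset.sum_subset (Finset.range_subset_range.mpr (by omega))
        (fun b _ hb => by rw [surj_eq_zero (by simp at hb; omega)]; ring)
    rw [hJ0, hJ1, Finset.mul_sum]
    have e : ∀ i ∈ Finset.range (n+1),
        (n.choose m * ∑ a ∈ Finset.range (n+1), Surj m a)
          * (Surj (n-m) i * (k-1+i).choose i)
        = ∑ a ∈ Finset.range (n+1),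
            (n.choose m * Surj m a * Surj (n-m) i) * (k-1+i).choose i := by
      intro i _
      rw [Finset.mul_sum, Finset.sum_mul]
      exact Finset.sum_congr rfl fun a _ => by ring
    rw [Finset.sum_congr rfl e, Finset.sum_comm]
  rw [Finset.sum_congr rfl hsplit]
  rw [Finset.sum_comm]
  have h2 : ∀ a ∈ Finset.range (n+1),
      ∑ m ∈ Finset.range (n+1), ∑ b ∈ Finset.range (n+1),
        (n.choose m * Surj m a * Surj (n-m) b) * (k-1+b).choose b
      = ∑ b ∈ Finset.range (n+1), Surj n (a+b) * (k-1+b).choose b := by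
    intro a _
    rw [Finset.sum_comm]
    refine Finset.sum_congr rfl fun b _ => ?_
    rw [← Finset.sum_mul, conv n a b]
  rw [Finset.sum_congr rfl h2]
  rw [tri (n+1) (fun s => Surj n s) (fun b => (k-1+b).choose b)
    (fun s hs => surj_eq_zero (by omega))]
  rw [hJ]
  refine Finset.sum_congr rfl fun s _ => ?_
  rw [hockey (k-1) s]
  have : k - 1 + 1 = k := by omega
  rw [this]
end

section
/- For each k ≥ 0, the exponential generating function of J^k_n satisfies ∑_{n≥0} J^k_n x^n/n! = 1/(2 − e^x)^{k+1}, as an identity of formal power series over ℚ, where J^k_n = ∑_{s=0}^{n} S(n,s)·s!·C(k+s,s). -/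
/-!
Since `s! S(n,s)` counts surjections onto an `s`-set, its exponential generating function in `n`
is `(eˣ - 1)ˢ`. Hence the EGF of `J k` is `∑ₛ C(k+s,s) (eˣ - 1)ˢ`, the substitution of
`y = eˣ - 1` into `∑ₛ C(k+s,s) yˢ = (1 - y)^{-(k+1)}`, and `1 - y = 2 - eˣ`.
-/

open Finset Nat PowerSeries

theorem stirling_eq_stirlingSecond : stirling = stirlingSecond := by
  funext n s
  induction n generalizing s with
  | zero => cases s <;> rfl
  | succ n ih => cases s <;> simp [stirling, stirlingSecond, ih]

namespace PowerSeries

variable {A : Type*} [CommRing A] [Algebra ℚ A]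

theorem factorial_mul_coeff_exp_sub_one_pow (n s : ℕ) :
    (n ! : A) * coeff n ((exp A - 1) ^ s) = (s ! * stirlingSecond n s : ℕ) := by
  induction n generalizing s with
  | zero => cases s <;> simp
  | succ n ih =>
    cases s with
    | zero => simp [coeff_one]
    | succ s =>
      -- `(eˣ - 1)' = (eˣ - 1) + 1` turns the derivative into the recurrence for `S(n,s)`
      have hderiv : d⁄dX A ((exp A - 1) ^ (s + 1)) =
          C (s + 1 : A) * ((exp A - 1) ^ (s + 1) + (exp A - 1) ^ s) := by
        rw [derivative_pow, map_sub, derivative_exp, derivative_one, sub_zero]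
        simp only [add_tsub_cancel_right, map_add, map_natCast, map_one]
        push_cast
        ring
      have hcoeff := congrArg (coeff n) hderiv
      rw [coeff_derivative, coeff_C_mul, map_add] at hcoeff
      have ih₁ := ih (s + 1)
      have ih₀ := ih s
      push_cast [factorial_succ, stirlingSecond_succ_succ] at ih₁ ih₀ ⊢
      linear_combination (n ! : A) * hcoeff + (s + 1 : A) * (ih₁ + ih₀)

theorem hasSubst_exp_sub_one : HasSubst (exp A - 1) :=
  HasSubst.of_constantCoeff_zero' (by simp)

theorem factorial_mul_coeff_subst_exp_sub_one (f : A⟦X⟧) (n : ℕ) :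
    (n ! : A) * coeff n (f.subst (exp A - 1)) =
      ∑ s ∈ range (n + 1), coeff s f * (s ! * stirlingSecond n s : ℕ) := by
  have hvanish : ∀ s, n < s → coeff n ((exp A - 1) ^ s) = 0 := fun s hs =>
    X_pow_dvd_iff.mp (pow_dvd_pow_of_dvd (X_dvd_iff.mpr (by simp)) s) n hs
  rw [coeff_subst' hasSubst_exp_sub_one, finsum_eq_sum_of_support_subset (s := range (n + 1)),
    mul_sum]
  · refine sum_congr rfl fun s _ => ?_
    rw [smul_eq_mul, mul_left_comm, factorial_mul_coeff_exp_sub_one_pow]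
  · intro s hs
    rw [mem_coe, mem_range]
    by_contra! h
    exact hs (by dsimp only; rw [hvanish s (by omega), smul_zero])

theorem subst_exp_sub_one_one_sub_X : (1 - X : A⟦X⟧).subst (exp A - 1) = 2 - exp A := by
  rw [← coe_substAlgHom hasSubst_exp_sub_one, map_sub, map_one, coe_substAlgHom,
    subst_X hasSubst_exp_sub_one]
  ring

end PowerSeries

theorem egf_J_eq_subst (k : ℕ) :
    mk (fun n => (J k n : ℚ) / n !) = (mk fun s => ((k + s).choose k : ℚ)).subst (exp ℚ - 1) := by
  ext n
  rw [coeff_mk, div_eq_iff (by positivity), mul_comm, factorial_mul_coeff_subst_exp_sub_one, J,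
    stirling_eq_stirlingSecond]
  push_cast
  refine sum_congr rfl fun s _ => ?_
  rw [coeff_mk, choose_symm_add]
  ring

theorem stmt_3 (k : ℕ) :
    PowerSeries.mk (fun n => (J k n : ℚ) / n.factorial) =
      ((2 - PowerSeries.exp ℚ)⁻¹) ^ (k + 1) := by
  have hunit : constantCoeff (2 - exp ℚ) ≠ 0 := by norm_num [map_ofNat]
  have hmul : mk (fun n => (J k n : ℚ) / n !) * (2 - exp ℚ) ^ (k + 1) = 1 := by
    rw [egf_J_eq_subst, ← subst_exp_sub_one_one_sub_X, ← subst_pow hasSubst_exp_sub_one,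
      ← subst_mul hasSubst_exp_sub_one, mk_add_choose_mul_one_sub_pow_eq_one,
      ← coe_substAlgHom hasSubst_exp_sub_one, map_one]
  refine left_inv_eq_right_inv hmul ?_
  rw [← mul_pow, PowerSeries.mul_inv_cancel _ hunit, one_pow]
end

section
/- For all n ≥ 1 and k ≥ 1, p^k_n = p^{k−1}_n + ∑_{s=0}^{n−1} C(n,s) · p^{k−1}_s, where p^k_n := ∑_{s=0}^{n} C(n,s) · J^0_s · k^{n−s}. -/
/-- `p k n`: barred preferential arrangements with `k` bars, one free section and
`k` restricted sections. -/
def p (k n : ℕ) : ℕ :=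
  ∑ s ∈ Finset.range (n + 1), n.choose s * J 0 s * k ^ (n - s)

open Finset

theorem sum_Ico_choose_mul_choose_mul_pow {R : Type*} [CommSemiring R] (x : R) {t n : ℕ}
    (htn : t ≤ n) :
    ∑ s ∈ Ico t (n + 1), (n.choose s * s.choose t : R) * x ^ (s - t) =
      n.choose t * (x + 1) ^ (n - t) := by
  rw [sum_Ico_eq_sum_range, show n + 1 - t = n - t + 1 by omega, add_pow, mul_sum]
  refine sum_congr rfl fun m _ => ?_
  rw [← Nat.cast_mul, Nat.choose_mul (Nat.le_add_right t m), Nat.add_sub_cancel_left,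
    Nat.cast_mul, one_pow, mul_one]
  ring

theorem sum_choose_mul_sum_choose_mul_pow {R : Type*} [CommSemiring R] (b : ℕ → R) (x : R)
    (n : ℕ) :
    ∑ s ∈ range (n + 1), (n.choose s : R) * ∑ t ∈ range (s + 1), s.choose t * b t * x ^ (s - t) =
      ∑ t ∈ range (n + 1), n.choose t * b t * (x + 1) ^ (n - t) := by
  simp only [mul_sum, range_eq_Ico]
  rw [← sum_Ico_Ico_comm]
  refine sum_congr rfl fun t ht => ?_
  rw [mul_right_comm, ← sum_Ico_choose_mul_choose_mul_pow x (Nat.lt_succ_iff.mp (mem_Ico.mp ht).2), sum_mul]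
  exact sum_congr rfl fun s _ => by ring

theorem p_succ (k n : ℕ) : p (k + 1) n = ∑ s ∈ range (n + 1), n.choose s * p k s := by
  simpa [p] using (sum_choose_mul_sum_choose_mul_pow (J 0) k n).symm

theorem stmt_9_general (n k : ℕ) (hk : 1 ≤ k) :
    p k n = p (k - 1) n + ∑ s ∈ Finset.range n, n.choose s * p (k - 1) s := by
  obtain ⟨j, rfl⟩ : ∃ j, k = j + 1 := ⟨k - 1, by omega⟩
  rw [p_succ, sum_range_succ, Nat.choose_self, one_mul, add_comm, Nat.add_sub_cancel]

theorem stmt_9 (n k : ℕ) (hn : 1 ≤ n) (hk : 1 ≤ k) :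
    p k n = p (k - 1) n + ∑ s ∈ Finset.range n, n.choose s * p (k - 1) s :=
  stmt_9_general n k hk
end

section
/- For all r ≥ 0, j ≥ 1, and n ≥ 1, p^r_j(n) = p^r_{j−1}(n) + ∑_{s=0}^{n−1} C(n,s) · p^r_{j−1}(s) · J^0_{n−s}, where p^r_j(n) := ∑_{s=0}^{n} C(n,s) · J^{j−1}_s · r^{n−s} for j ≥ 1 and p^r_0(n) := r^n. -/
/-- `P r j n`: barred preferential arrangements of an `n`-set with `r + j - 1` bars,
with `r` restricted sections and `j` free sections. -/
def P (r : ℕ) : ℕ → ℕ → ℕ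
  | 0, n => r ^ n
  | j + 1, n => ∑ s ∈ Finset.range (n + 1), n.choose s * J j s * r ^ (n - s)


/-! Binomial convolution `(f ⋆ g) n = ∑ C(n,s) f s g (n-s)` is the product of exponential
generating functions, hence commutative and associative. As `P r (j+1) = J j ⋆ r^·`, splitting
off the term `s = n` reduces the theorem to `P r (j+1) = P r j ⋆ J 0`, which follows from
`J (k+1) = J k ⋆ J 0`. That in turn comes from the convolution law `σ a ⋆ σ b = σ (a+b)`
for the ordered Stirling numbers `σ a n = a!·S(n,a)` (surjections `[n] → [a]`: choose which
points map to the first `a` values) and the hockey-stick identity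
`∑_{a ≤ c} C(k+a,a) = C(k+1+c,c)`. -/

open Finset

def binConv (f g : ℕ → ℕ) (n : ℕ) : ℕ :=
  ∑ s ∈ range (n + 1), n.choose s * f s * g (n - s)

def egf (f : ℕ → ℕ) : PowerSeries ℚ :=
  PowerSeries.mk fun n => (f n : ℚ) / n.factorial

theorem egf_injective : Function.Injective egf := by
  intro f g h
  funext n
  simpa [egf, Nat.factorial_ne_zero] using congrArg (PowerSeries.coeff n) h

theorem egf_binConv (f g : ℕ → ℕ) : egf (binConv f g) = egf f * egf g := by
  ext n
  rw [PowerSeries.coeff_mul, Finset.Nat.sum_antidiagonal_eq_sum_range_succ_mk]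
  simp only [egf, PowerSeries.coeff_mk, binConv, Nat.cast_sum, Nat.cast_mul, sum_div]
  refine sum_congr rfl fun s hs => ?_
  rw [Nat.cast_choose ℚ (mem_range_succ_iff.mp hs)]
  field_simp

theorem binConv_comm (f g : ℕ → ℕ) : binConv f g = binConv g f :=
  egf_injective (by rw [egf_binConv, egf_binConv, mul_comm])

theorem binConv_assoc (f g h : ℕ → ℕ) :
    binConv (binConv f g) h = binConv f (binConv g h) :=
  egf_injective (by simp only [egf_binConv, mul_assoc])

theorem binConv_succ (f g : ℕ → ℕ) (n : ℕ) :
    binConv f g (n + 1) =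
      binConv (fun m => f (m + 1)) g n + binConv f (fun m => g (m + 1)) n := by
  have leibniz := sum_choose_succ_mul (R := ℕ) (fun i j => f i * g j) n
  simp only [Nat.cast_id, ← mul_assoc] at leibniz
  rw [binConv, leibniz, add_comm]
  congr 1
  exact sum_congr rfl fun s hs => by rw [Nat.sub_add_comm (mem_range_succ_iff.mp hs)]

theorem stirling_eq_stirlingSecond_s11 : ∀ n k, stirling n k = Nat.stirlingSecond n k
  | 0, 0 | 0, _ + 1 | _ + 1, 0 => rfl
  | n + 1, k + 1 => by
    rw [stirling, Nat.stirlingSecond_succ_succ, stirling_eq_stirlingSecond_s11 n,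
      stirling_eq_stirlingSecond_s11 n]

def orderedStirling (n k : ℕ) : ℕ := stirling n k * k.factorial

theorem orderedStirling_eq_zero_of_lt {n k : ℕ} (h : n < k) : orderedStirling n k = 0 := by
  rw [orderedStirling, stirling_eq_stirlingSecond_s11, Nat.stirlingSecond_eq_zero_of_lt h, zero_mul]

theorem orderedStirling_succ_left (n k : ℕ) :
    orderedStirling (n + 1) k = k * (orderedStirling n k + orderedStirling n (k - 1)) := by
  cases k with
  | zero => simp [orderedStirling, stirling]
  | succ k =>
    simp only [orderedStirling, stirling, Nat.factorial_succ, Nat.add_sub_cancel]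
    ring

theorem binConv_orderedStirling (a b n : ℕ) :
    binConv (orderedStirling · a) (orderedStirling · b) n = orderedStirling n (a + b) := by
  induction n generalizing a b with
  | zero => cases a <;> cases b <;> simp [binConv, orderedStirling, stirling]
  | succ n ih =>
    have shift_left : binConv (fun m => orderedStirling (m + 1) a) (orderedStirling · b) n =
        a * (orderedStirling n (a + b) + orderedStirling n (a - 1 + b)) := by
      simp only [← ih, binConv, orderedStirling_succ_left, mul_sum, ← sum_add_distrib]
      exact sum_congr rfl fun _ _ => by ring
    have shift_right : binConv (orderedStirling · a) (fun m => orderedStirling (m + 1) b) n =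
        b * (orderedStirling n (a + b) + orderedStirling n (a + (b - 1))) := by
      simp only [← ih, binConv, orderedStirling_succ_left, mul_sum, ← sum_add_distrib]
      exact sum_congr rfl fun _ _ => by ring
    have left_index : a * orderedStirling n (a - 1 + b) = a * orderedStirling n (a + b - 1) := by
      rcases a with _ | a
      · simp
      · rw [Nat.add_sub_cancel, Nat.add_right_comm, Nat.add_sub_cancel]
    have right_index : b * orderedStirling n (a + (b - 1)) = b * orderedStirling n (a + b - 1) := by
      rcases b with _ | b
      · simp
      · rw [Nat.add_sub_cancel, ← Nat.add_assoc, Nat.add_sub_cancel]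
    rw [binConv_succ, shift_left, shift_right, orderedStirling_succ_left]
    linear_combination left_index + right_index

theorem J_eq_sum_of_le (k : ℕ) {n N : ℕ} (h : n ≤ N) :
    J k n = ∑ s ∈ range (N + 1), orderedStirling n s * (k + s).choose s := by
  change ∑ s ∈ range (n + 1), orderedStirling n s * (k + s).choose s = _
  refine sum_subset (range_subset_range.2 (by omega)) fun s _ hs => ?_
  rw [orderedStirling_eq_zero_of_lt (by simpa using hs), zero_mul]

theorem sum_range_add_choose_self (k c : ℕ) :
    ∑ a ∈ range (c + 1), (k + a).choose a = (k + 1 + c).choose c := by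
  calc ∑ a ∈ range (c + 1), (k + a).choose a
      = ∑ a ∈ range (c + 1), (a + k).choose k :=
        sum_congr rfl fun a _ => by rw [add_comm, Nat.choose_symm_add]
    _ = (c + k + 1).choose (k + 1) := Nat.sum_range_add_choose c k
    _ = (k + 1 + c).choose c := by rw [Nat.add_assoc, Nat.add_comm c, Nat.choose_symm_add]

theorem J_succ (k : ℕ) : J (k + 1) = binConv (J k) (J 0) := by
  funext n
  symm
  calc binConv (J k) (J 0) n
      = ∑ m ∈ range (n + 1), ∑ a ∈ range (n + 1), ∑ b ∈ range (n + 1),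
          (k + a).choose a * (n.choose m * orderedStirling m a * orderedStirling (n - m) b) := by
        refine sum_congr rfl fun m hm => ?_
        rw [J_eq_sum_of_le k (mem_range_succ_iff.mp hm), J_eq_sum_of_le 0 (Nat.sub_le n m)]
        simp only [mul_sum, sum_mul, zero_add, Nat.choose_self, mul_one]
        rw [sum_comm]
        exact sum_congr rfl fun _ _ => sum_congr rfl fun _ _ => by ring
    _ = ∑ a ∈ range (n + 1), ∑ b ∈ range (n + 1),
          (k + a).choose a * orderedStirling n (a + b) := by
        rw [sum_comm]
        refine sum_congr rfl fun a _ => ?_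
        rw [sum_comm]
        simp only [← binConv_orderedStirling, binConv, mul_sum]
    _ = ∑ a ∈ range (n + 1), ∑ b ∈ range (n + 1 - a),
          (k + a).choose a * orderedStirling n (a + b) := by
        refine sum_congr rfl fun a _ => (sum_subset (range_subset_range.2 (by omega)) ?_).symm
        intro b _ hb
        rw [orderedStirling_eq_zero_of_lt (by simp at hb; omega), mul_zero]
    _ = ∑ c ∈ range (n + 1), ∑ a ∈ range (c + 1),
          (k + a).choose a * orderedStirling n (a + (c - a)) :=
        (sum_range_diag_flip _ fun a b => (k + a).choose a * orderedStirling n (a + b)).symm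
    _ = J (k + 1) n := by
        refine sum_congr rfl fun c _ => ?_
        rw [← sum_range_add_choose_self, mul_sum]
        exact sum_congr rfl fun a ha => by
          rw [Nat.add_sub_cancel' (mem_range_succ_iff.mp ha), orderedStirling]; ring

theorem P_succ (r j : ℕ) : P r (j + 1) = binConv (J j) (r ^ ·) := rfl

theorem P_succ_eq_binConv (r j : ℕ) : P r (j + 1) = binConv (P r j) (J 0) := by
  cases j with
  | zero => exact binConv_comm _ _
  | succ j => rw [P_succ, J_succ, binConv_assoc, binConv_comm (J 0), ← binConv_assoc, ← P_succ]

theorem stmt_11_general (r j n : ℕ) (hj : 1 ≤ j) :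
    P r j n = P r (j - 1) n +
      ∑ s ∈ Finset.range n, n.choose s * P r (j - 1) s * J 0 (n - s) := by
  obtain ⟨j, rfl⟩ := Nat.exists_eq_add_of_le' hj
  have fubini_zero : J 0 0 = 1 := rfl
  rw [Nat.add_sub_cancel, P_succ_eq_binConv, binConv, sum_range_succ, Nat.choose_self,
    Nat.sub_self, fubini_zero, one_mul, mul_one, add_comm]

theorem stmt_11 (r j n : ℕ) (hj : 1 ≤ j) (hn : 1 ≤ n) :
    P r j n = P r (j - 1) n +
      ∑ s ∈ Finset.range n, n.choose s * P r (j - 1) s * J 0 (n - s) :=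
  stmt_11_general r j n hj
end
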